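/- arXiv:1410.3155 — 6 statements merged into one kernel-verified Lean document; each statement's English description precedes it below -/
import Mathlib

section
/- For every real number a < 1 with a ≠ 0 and all integers 1 ≤ l ≤ n, the generalized Stirling number satisfies S_a(n,l) = (1/(l!·a^l)) · Σ_{k=0}^{l} (−1)^k · C(l,k) · ∏_{i=0}^{n−1} (i − a·k), where C(l,k) is the binomial coefficient. -/
/-!
Since `Γ(m - a) = Γ(-a) · (-a)(1 - a)⋯(m - 1 - a)`, the weights `Γ(m - a) / (m! Γ(1 - a))`, `m ≥ 1`,
are the coefficients of `(1 - (1 - x)^a) / a`, so `S_a(n, l)` is `n! / l!` times the `n`-th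
coefficient of its `l`-th power. By the binomial theorem that power is
`a⁻ˡ Σ_k (-1)^k C(l, k) (1 - x)^(ak)`, and the `n`-th coefficient of `(1 - x)^(ak)` is
`∏_{i<n} (i - ak) / n!`.
-/

open scoped Classical BigOperators

/-- Generalized Stirling numbers of the first kind:
`S_a(n,l) = (n!/l!) · Σ over compositions of n into l positive parts of
∏ Γ(n_k − a)/(n_k!·Γ(1−a))`. -/
noncomputable def genStirling (a : ℝ) (n l : ℕ) : ℝ :=
  (n.factorial : ℝ) / (l.factorial : ℝ) *
    ∑ f ∈ (Finset.Nat.antidiagonalTuple l n).filter (fun f => ∀ k, 0 < f k),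
      ∏ k, Real.Gamma ((f k : ℝ) - a) / ((f k).factorial * Real.Gamma (1 - a))

open Finset PowerSeries
open scoped Nat

lemma prod_range_natCast_sub_eq_neg_one_pow_mul {R : Type*} [CommRing R] (x : R) (n : ℕ) :
    ∏ i ∈ range n, ((i : R) - x) = (-1) ^ n * ∏ i ∈ range n, (x - i) := by
  simpa [neg_sub] using prod_neg (s := range n) (fun i : ℕ => x - i)

section Binomial

variable {R : Type*} [CommRing R] [BinomialRing R]

lemma Ring.factorial_mul_choose_eq_prod (r : R) (n : ℕ) :
    (n ! : R) * Ring.choose r n = ∏ j ∈ range n, (r - j) := by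
  rw [← nsmul_eq_mul, ← Ring.descPochhammer_eq_factorial_smul_choose,
    ← Polynomial.aeval_eq_smeval, ← Polynomial.eval_map_algebraMap, algebraMap_int_eq,
    descPochhammer_map, descPochhammer_eval_eq_prod_range]

lemma PowerSeries.binomialSeries_pow {A : Type*} [Ring A] [Algebra R A] (r : R) (k : ℕ) :
    binomialSeries A r ^ k = binomialSeries A (r * k) := by
  induction k with
  | zero => simp
  | succ k ih => rw [pow_succ, ih, ← binomialSeries_add, Nat.cast_succ, mul_add_one]

lemma PowerSeries.coeff_one_sub_binomialSeries_pow (r : R) (l n : ℕ) :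
    coeff n ((1 - binomialSeries R r) ^ l) =
      ∑ k ∈ range (l + 1), (-1) ^ k * l.choose k * Ring.choose (r * k) n := by
  rw [sub_eq_neg_add, add_pow, map_sum]
  refine sum_congr rfl fun k _ => ?_
  have hC : (-binomialSeries R r) ^ k * 1 ^ (l - k) * (l.choose k : R⟦X⟧) =
      C ((-1 : R) ^ k * l.choose k) * binomialSeries R (r * k) := by
    rw [neg_pow, binomialSeries_pow, one_pow, mul_one, map_mul, map_pow, map_neg, map_one,
      map_natCast]
    ring
  rw [hC, coeff_C_mul, binomialSeries_coeff, smul_eq_mul, mul_one]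

end Binomial

lemma PowerSeries.coeff_pow_eq_sum_antidiagonalTuple {R : Type*} [CommSemiring R]
    (f : R⟦X⟧) (l n : ℕ) :
    coeff n (f ^ l) = ∑ t ∈ Nat.antidiagonalTuple l n, ∏ i, coeff (t i) f := by
  rw [← Fin.prod_const, coeff_prod]
  exact sum_equiv Finsupp.equivFunOnFinite (by simp [Nat.mem_antidiagonalTuple]) (by simp)

lemma Real.Gamma_add_nat_eq_mul_prod {x : ℝ} (hx : ∀ m : ℕ, x ≠ -m) (n : ℕ) :
    Real.Gamma (x + n) = Real.Gamma x * ∏ i ∈ range n, (x + i) := by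
  induction n with
  | zero => simp
  | succ n ih =>
    have hxn : x + n ≠ 0 := fun h => hx n (eq_neg_of_add_eq_zero_left h)
    rw [Nat.cast_succ, ← add_assoc, Real.Gamma_add_one hxn, ih, prod_range_succ]
    ring

noncomputable def genStirlingSeries (a : ℝ) : ℝ⟦X⟧ :=
  mk fun m => if m = 0 then 0 else Real.Gamma (m - a) / (m ! * Real.Gamma (1 - a))

lemma genStirling_eq_coeff_pow (a : ℝ) (n l : ℕ) :
    genStirling a n l = n ! / l ! * coeff n (genStirlingSeries a ^ l) := by
  rw [genStirling, coeff_pow_eq_sum_antidiagonalTuple, sum_filter]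
  refine congrArg _ (sum_congr rfl fun t _ => ?_)
  split_ifs with ht
  · exact prod_congr rfl fun k _ => by rw [genStirlingSeries, coeff_mk, if_neg (ht k).ne']
  · obtain ⟨k, hk⟩ := not_forall.mp ht
    refine (prod_eq_zero (mem_univ k) ?_).symm
    rw [genStirlingSeries, coeff_mk, if_pos (Nat.eq_zero_of_not_pos hk)]

lemma Real.Gamma_natCast_sub_div {a : ℝ} (ha : ∀ k : ℕ, a ≠ k) (m : ℕ) :
    Real.Gamma (m - a) / (m ! * Real.Gamma (1 - a)) = -((-1) ^ m * Ring.choose a m) / a := by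
  have hpole (k : ℕ) : -a ≠ -k := neg_inj.not.mpr (ha k)
  have ha0 : a ≠ 0 := by simpa using ha 0
  have hΓ : Real.Gamma (-a) ≠ 0 := Real.Gamma_ne_zero hpole
  have h1 : Real.Gamma (1 - a) = -a * Real.Gamma (-a) := by
    rw [sub_eq_neg_add, Real.Gamma_add_one (neg_ne_zero.mpr ha0)]
  have hm := Real.Gamma_add_nat_eq_mul_prod hpole m
  simp_rw [neg_add_eq_sub] at hm
  rw [h1, hm, prod_range_natCast_sub_eq_neg_one_pow_mul, ← Ring.factorial_mul_choose_eq_prod]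
  field_simp

lemma C_mul_genStirlingSeries {a : ℝ} (ha : ∀ k : ℕ, a ≠ k) :
    C a * genStirlingSeries a = rescale (-1) (1 - PowerSeries.binomialSeries ℝ a) := by
  have ha0 : a ≠ 0 := by simpa using ha 0
  ext m
  rw [coeff_C_mul, coeff_rescale, map_sub, genStirlingSeries, coeff_mk, binomialSeries_coeff,
    smul_eq_mul, mul_one]
  rcases m with _ | m
  · simp
  · rw [if_neg m.succ_ne_zero, coeff_one, if_neg m.succ_ne_zero, Real.Gamma_natCast_sub_div ha]
    field_simp
    ring

theorem genStirling_eq_alternating_sum_general (a : ℝ) (ha : a < 1) (ha0 : a ≠ 0)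
    (n l : ℕ) :
    genStirling a n l =
      1 / ((l.factorial : ℝ) * a ^ l) *
        ∑ k ∈ Finset.range (l + 1),
          (-1 : ℝ) ^ k * (l.choose k : ℝ) * ∏ i ∈ Finset.range n, ((i : ℝ) - a * (k : ℝ)) := by
  have hnat (k : ℕ) : a ≠ k := by
    rcases k.eq_zero_or_pos with rfl | hk
    · simpa using ha0
    · exact (ha.trans_le (by exact_mod_cast hk)).ne
  have hcoeff : a ^ l * coeff n (genStirlingSeries a ^ l) =
      (-1) ^ n * ∑ k ∈ range (l + 1), (-1) ^ k * l.choose k * Ring.choose (a * k) n := by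
    rw [← coeff_C_mul, map_pow, ← mul_pow, C_mul_genStirlingSeries hnat, ← map_pow,
      coeff_rescale, coeff_one_sub_binomialSeries_pow]
  have hprod (k : ℕ) :
      ∏ i ∈ range n, ((i : ℝ) - a * k) = (-1) ^ n * (n ! * Ring.choose (a * k) n) := by
    rw [Ring.factorial_mul_choose_eq_prod, prod_range_natCast_sub_eq_neg_one_pow_mul]
  calc genStirling a n l = n ! / (l ! * a ^ l) * (a ^ l * coeff n (genStirlingSeries a ^ l)) := by
        rw [genStirling_eq_coeff_pow]
        field_simp
    _ = _ := by
        simp only [hcoeff, hprod, mul_sum]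
        exact sum_congr rfl fun k _ => by ring

/-- For a < 1, a ≠ 0 and 1 ≤ l ≤ n:
S_a(n,l) = (1/(l!·a^l)) · Σ_{k=0}^{l} (−1)^k C(l,k) ∏_{i=0}^{n−1}(i − a·k). -/
theorem genStirling_eq_alternating_sum (a : ℝ) (ha : a < 1) (ha0 : a ≠ 0)
    (n l : ℕ) (hl : 1 ≤ l) (hln : l ≤ n) :
    genStirling a n l =
      1 / ((l.factorial : ℝ) * a ^ l) *
        ∑ k ∈ Finset.range (l + 1),
          (-1 : ℝ) ^ k * (l.choose k : ℝ) * ∏ i ∈ Finset.range n, ((i : ℝ) - a * (k : ℝ)) :=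
  genStirling_eq_alternating_sum_general a ha ha0 n l
end

section
/- Let ρ be a σ-finite measure on (0,∞) with ∫_0^∞ min(1,s) ρ(ds) < ∞. Then for every j ≥ 1 the integral ∫_0^∞ s^j e^{−s} ρ(ds) is finite, and for every t ∈ [0,1] the series Σ_{j=1}^∞ (t^j/j!) ∫_0^∞ s^j e^{−s} ρ(ds) converges and ∫_0^∞ (1 − e^{−(1−t)s}) ρ(ds) = ∫_0^∞ (1 − e^{−s}) ρ(ds) − Σ_{j=1}^∞ (t^j/j!) ∫_0^∞ s^j e^{−s} ρ(ds). (This identifies the completely-random-measure mixed Poisson process as a compound Poisson process whose number of clusters is Poisson with mean G_0(Ω)·∫(1−e^{−s})ρ(ds) and whose cluster sizes have probability mass function π_j = ∫ s^j e^{−s} ρ(ds) / (j! ∫(1−e^{−s})ρ(ds)); the case t = 1 shows Σ_j π_j = 1.) -/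
/-!
Expanding `exp (t s) - 1` in its Taylor series gives, for each `s > 0`,
`exp (-(1 - t) s) - exp (-s) = ∑_{j ≥ 1} (t ^ j / j!) s ^ j exp (-s)`, a series of nonnegative
terms whose partial sums are dominated by `1 - exp (-s) ≤ min 1 s`. Integrability of `min 1 s`
against `ρ` therefore lets the series be integrated termwise (dominated convergence), and the
identity follows from `1 - exp (-(1 - t) s) = (1 - exp (-s)) - (exp (-(1 - t) s) - exp (-s))`.
-/

open MeasureTheory Set

lemma hasSum_pow_div_factorial_succ (x : ℝ) :
    HasSum (fun j : ℕ => x ^ (j + 1) / ((j + 1).factorial : ℝ)) (Real.exp x - 1) := by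
  simpa [Real.exp_eq_exp_ℝ] using
    (hasSum_nat_add_iff' 1).mpr (NormedSpace.expSeries_div_hasSum_exp x)

lemma hasSum_mul_pow_mul_exp_neg (t s : ℝ) :
    HasSum (fun j : ℕ => t ^ (j + 1) / ((j + 1).factorial : ℝ) * (s ^ (j + 1) * Real.exp (-s)))
      (Real.exp (-(1 - t) * s) - Real.exp (-s)) := by
  have hterm :
      (fun j : ℕ => t ^ (j + 1) / ((j + 1).factorial : ℝ) * (s ^ (j + 1) * Real.exp (-s)))
        = fun j : ℕ => (t * s) ^ (j + 1) / ((j + 1).factorial : ℝ) * Real.exp (-s) := by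
    funext j
    rw [mul_pow]
    ring
  have hvalue :
      Real.exp (-(1 - t) * s) - Real.exp (-s) = (Real.exp (t * s) - 1) * Real.exp (-s) := by
    rw [sub_mul, one_mul, ← Real.exp_add]
    ring_nf
  rw [hterm, hvalue]
  exact (hasSum_pow_div_factorial_succ (t * s)).mul_right (Real.exp (-s))

lemma one_sub_exp_neg_le_min_one (s : ℝ) : 1 - Real.exp (-s) ≤ min 1 s :=
  le_min (by linarith [Real.exp_pos (-s)]) (by linarith [Real.add_one_le_exp (-s)])

lemma pow_mul_exp_neg_le_factorial_mul_min_one {j : ℕ} (hj : j ≠ 0) {s : ℝ} (hs : 0 ≤ s) :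
    s ^ j * Real.exp (-s) ≤ j.factorial * min 1 s := by
  rcases le_total s 1 with hs1 | hs1
  · rw [min_eq_right hs1]
    calc s ^ j * Real.exp (-s) ≤ s * 1 :=
          mul_le_mul (pow_le_of_le_one hs hs1 hj) (Real.exp_le_one_iff.mpr (by linarith))
            (Real.exp_pos _).le hs
      _ ≤ j.factorial * s := by
          rw [mul_one]
          exact le_mul_of_one_le_left hs (by exact_mod_cast j.factorial_pos)
  · rw [min_eq_left hs1, mul_one]
    have hexp : s ^ j ≤ Real.exp s * j.factorial :=
      (div_le_iff₀ (by positivity)).mp (Real.pow_div_factorial_le_exp s hs j)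
    calc s ^ j * Real.exp (-s) ≤ Real.exp s * j.factorial * Real.exp (-s) := by gcongr
      _ = j.factorial := by
          rw [mul_right_comm, ← Real.exp_add, add_neg_cancel, Real.exp_zero, one_mul]

lemma abs_exp_neg_one_sub_mul_sub_exp_neg_le_min_one {t s : ℝ} (ht : t ∈ Icc (0 : ℝ) 1)
    (hs : 0 ≤ s) : |Real.exp (-(1 - t) * s) - Real.exp (-s)| ≤ min 1 s := by
  have hlow : Real.exp (-s) ≤ Real.exp (-(1 - t) * s) :=
    Real.exp_le_exp.mpr (by nlinarith [ht.1])
  have hup : Real.exp (-(1 - t) * s) ≤ 1 := Real.exp_le_one_iff.mpr (by nlinarith [ht.2])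
  rw [abs_of_nonneg (sub_nonneg.mpr hlow)]
  linarith [one_sub_exp_neg_le_min_one s]

section LevyMeasure

variable {μ : Measure ℝ}

lemma integrableOn_min_one_of_lintegral_lt_top
    (h : ∫⁻ s in Ioi (0 : ℝ), ENNReal.ofReal (min 1 s) ∂μ < ⊤) :
    IntegrableOn (fun s : ℝ => min 1 s) (Ioi 0) μ :=
  (lintegral_ofReal_ne_top_iff_integrable (by fun_prop)
    (by filter_upwards [ae_restrict_mem measurableSet_Ioi] with s hs using
      le_min zero_le_one (le_of_lt hs))).mp h.ne

lemma integrableOn_of_abs_le_mul_min_one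
    (hμ : IntegrableOn (fun s : ℝ => min 1 s) (Ioi 0) μ) {f : ℝ → ℝ}
    (hf : Measurable f) (C : ℝ) (hbound : ∀ s, 0 < s → |f s| ≤ C * min 1 s) :
    IntegrableOn f (Ioi 0) μ :=
  (hμ.const_mul C).mono' hf.aestronglyMeasurable
    (by filter_upwards [ae_restrict_mem measurableSet_Ioi] with s hs using hbound s hs)

lemma integrableOn_pow_mul_exp_neg (hμ : IntegrableOn (fun s : ℝ => min 1 s) (Ioi 0) μ)
    {j : ℕ} (hj : j ≠ 0) :
    IntegrableOn (fun s : ℝ => s ^ j * Real.exp (-s)) (Ioi 0) μ :=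
  integrableOn_of_abs_le_mul_min_one hμ (by fun_prop) j.factorial fun s hs => by
    rw [abs_of_nonneg (by positivity)]
    exact pow_mul_exp_neg_le_factorial_mul_min_one hj hs.le

lemma integrableOn_one_sub_exp_neg (hμ : IntegrableOn (fun s : ℝ => min 1 s) (Ioi 0) μ) :
    IntegrableOn (fun s : ℝ => 1 - Real.exp (-s)) (Ioi 0) μ :=
  integrableOn_of_abs_le_mul_min_one hμ (by fun_prop) 1 fun s hs => by
    rw [one_mul, abs_of_nonneg (sub_nonneg.mpr (Real.exp_le_one_iff.mpr (by linarith)))]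
    exact one_sub_exp_neg_le_min_one s

lemma integrableOn_exp_neg_one_sub_mul_sub_exp_neg
    (hμ : IntegrableOn (fun s : ℝ => min 1 s) (Ioi 0) μ)
    {t : ℝ} (ht : t ∈ Icc (0 : ℝ) 1) :
    IntegrableOn (fun s : ℝ => Real.exp (-(1 - t) * s) - Real.exp (-s)) (Ioi 0) μ :=
  integrableOn_of_abs_le_mul_min_one hμ (by fun_prop) 1 fun s hs => by
    rw [one_mul]
    exact abs_exp_neg_one_sub_mul_sub_exp_neg_le_min_one ht hs.le

lemma hasSum_integral_pow_mul_exp_neg (hμ : IntegrableOn (fun s : ℝ => min 1 s) (Ioi 0) μ)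
    {t : ℝ} (ht : t ∈ Icc (0 : ℝ) 1) :
    HasSum (fun j : ℕ => t ^ (j + 1) / ((j + 1).factorial : ℝ) *
        ∫ s in Ioi (0 : ℝ), s ^ (j + 1) * Real.exp (-s) ∂μ)
      (∫ s in Ioi (0 : ℝ), (Real.exp (-(1 - t) * s) - Real.exp (-s)) ∂μ) := by
  set F : ℕ → ℝ → ℝ := fun j s =>
    t ^ (j + 1) / ((j + 1).factorial : ℝ) * (s ^ (j + 1) * Real.exp (-s))
  have hF_nonneg : ∀ j s, 0 < s → 0 ≤ F j s := fun j s hs => by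
    have := ht.1
    positivity
  simp_rw [← integral_const_mul]
  -- the terms are nonnegative, so they serve as their own dominating series
  refine hasSum_integral_of_dominated_convergence F (fun j => by fun_prop) (fun j => ?_)
    (ae_of_all _ fun s => (hasSum_mul_pow_mul_exp_neg t s).summable) ?_
    (ae_of_all _ fun s => hasSum_mul_pow_mul_exp_neg t s)
  · filter_upwards [ae_restrict_mem measurableSet_Ioi] with s hs
    exact (Real.norm_of_nonneg (hF_nonneg j s hs)).le
  · simp_rw [F, (hasSum_mul_pow_mul_exp_neg t _).tsum_eq]
    exact integrableOn_exp_neg_one_sub_mul_sub_exp_neg hμ ht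

end LevyMeasure

theorem mixed_poisson_compound_poisson_identity_general
    (ρ : Measure ℝ)
    (hint : ∫⁻ s in Set.Ioi (0 : ℝ), ENNReal.ofReal (min 1 s) ∂ρ < ⊤) :
    (∀ j : ℕ, 1 ≤ j →
      IntegrableOn (fun s : ℝ => s ^ j * Real.exp (-s)) (Set.Ioi 0) ρ) ∧
    ∀ t : ℝ, t ∈ Set.Icc (0 : ℝ) 1 →
      Summable (fun j : ℕ =>
        t ^ (j + 1) / ((j + 1).factorial : ℝ) *
          ∫ s in Set.Ioi (0 : ℝ), s ^ (j + 1) * Real.exp (-s) ∂ρ) ∧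
      (∫ s in Set.Ioi (0 : ℝ), (1 - Real.exp (-(1 - t) * s)) ∂ρ)
        = (∫ s in Set.Ioi (0 : ℝ), (1 - Real.exp (-s)) ∂ρ)
          - ∑' j : ℕ,
              t ^ (j + 1) / ((j + 1).factorial : ℝ) *
                ∫ s in Set.Ioi (0 : ℝ), s ^ (j + 1) * Real.exp (-s) ∂ρ := by
  have hρ := integrableOn_min_one_of_lintegral_lt_top hint
  refine ⟨fun j hj => integrableOn_pow_mul_exp_neg hρ (by omega), fun t ht => ?_⟩
  have hsum := hasSum_integral_pow_mul_exp_neg hρ ht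
  refine ⟨hsum.summable, ?_⟩
  rw [hsum.tsum_eq, ← integral_sub (integrableOn_one_sub_exp_neg hρ)
    (integrableOn_exp_neg_one_sub_mul_sub_exp_neg hρ ht)]
  congr 1 with s
  ring

/-- Let ρ be a σ-finite measure on (0,∞) with ∫ min(1,s) ρ(ds) < ∞.  Then every
moment-type integral ∫ s^j e^{−s} ρ(ds) (j ≥ 1) is finite, and for every t ∈ [0,1]
the series Σ_{j≥1} (t^j/j!)·∫ s^j e^{−s} ρ(ds) converges with
∫ (1 − e^{−(1−t)s}) ρ(ds) = ∫ (1 − e^{−s}) ρ(ds) − Σ_{j≥1} (t^j/j!)·∫ s^j e^{−s} ρ(ds).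
This identifies the completely-random-measure mixed Poisson process as a compound
Poisson process; the case t = 1 shows the cluster-size probabilities π_j sum to 1. -/
theorem mixed_poisson_compound_poisson_identity
    (ρ : Measure ℝ) [SigmaFinite ρ] (hsupp : ρ (Set.Iic 0) = 0)
    (hint : ∫⁻ s in Set.Ioi (0 : ℝ), ENNReal.ofReal (min 1 s) ∂ρ < ⊤) :
    (∀ j : ℕ, 1 ≤ j →
      IntegrableOn (fun s : ℝ => s ^ j * Real.exp (-s)) (Set.Ioi 0) ρ) ∧
    ∀ t : ℝ, t ∈ Set.Icc (0 : ℝ) 1 →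
      Summable (fun j : ℕ =>
        t ^ (j + 1) / ((j + 1).factorial : ℝ) *
          ∫ s in Set.Ioi (0 : ℝ), s ^ (j + 1) * Real.exp (-s) ∂ρ) ∧
      (∫ s in Set.Ioi (0 : ℝ), (1 - Real.exp (-(1 - t) * s)) ∂ρ)
        = (∫ s in Set.Ioi (0 : ℝ), (1 - Real.exp (-s)) ∂ρ)
          - ∑' j : ℕ,
              t ^ (j + 1) / ((j + 1).factorial : ℝ) *
                ∫ s in Set.Ioi (0 : ℝ), s ^ (j + 1) * Real.exp (-s) ∂ρ :=
  mixed_poisson_compound_poisson_identity_general ρ hint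
end

section
/- For all real numbers a < 1 with a ≠ 0, c > 0 and φ ≥ 0, the integral ∫_0^∞ (1 − e^{−φ s}) · (1/Γ(1 − a)) · s^{−a−1} e^{−c s} ds is finite and equals ((c + φ)^a − c^a)/a. (This is the Lévy–Khintchine exponent of the generalized gamma process, linking its Laplace transform E[e^{−φ G(A)}] = exp{−(G_0(A)/a)·[(c+φ)^a − c^a]} to its Lévy measure.) -/
/-!
Write `(1 - e^{-φs}) s^{-a-1} e^{-cs} = ∫_c^{c+φ} s^{-a} e^{-ts} dt`. The kernel `s^{-a} e^{-ts}` is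
nonnegative with `∫_0^∞ s^{-a} e^{-ts} ds = Γ(1-a) t^{a-1}`, bounded for `t ∈ [c, c+φ]` since
`c > 0`, so Fubini applies and the integral becomes
`Γ(1-a) ∫_c^{c+φ} t^{a-1} dt = Γ(1-a) ((c+φ)^a - c^a) / a`.
-/

open MeasureTheory Real Set

section LevyKernel

variable {a t c d : ℝ}

theorem integral_rpow_neg_mul_exp_neg_mul_Ioi (ha : a < 1) (ht : 0 < t) :
    ∫ s in Ioi 0, s ^ (-a) * exp (-(t * s)) = Gamma (1 - a) * t ^ (a - 1) := by
  have h := integral_rpow_mul_exp_neg_mul_Ioi (sub_pos.2 ha) ht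
  rw [sub_sub_cancel_left, one_div, inv_rpow ht.le, ← rpow_neg ht.le, neg_sub] at h
  rw [h, mul_comm]

theorem integrableOn_rpow_neg_mul_exp_neg_mul_Ioi (ha : a < 1) (ht : 0 < t) :
    IntegrableOn (fun s ↦ s ^ (-a) * exp (-(t * s))) (Ioi 0) :=
  .of_integral_ne_zero <| by
    rw [integral_rpow_neg_mul_exp_neg_mul_Ioi ha ht]
    exact mul_ne_zero (Gamma_pos_of_pos (sub_pos.2 ha)).ne' (rpow_pos_of_pos ht _).ne'

theorem integral_exp_neg_mul {s : ℝ} (hs : s ≠ 0) :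
    ∫ t in c..d, exp (-(t * s)) = (exp (-(c * s)) - exp (-(d * s))) / s := by
  rw [intervalIntegral.integral_comp_mul_right (fun x ↦ exp (-x)) hs,
    intervalIntegral.integral_comp_neg, integral_exp, smul_eq_mul, inv_mul_eq_div]

theorem setIntegral_Ioc_rpow_neg_mul_exp_neg_mul {s : ℝ} (hs : 0 < s) (hcd : c ≤ d) :
    ∫ t in Ioc c d, s ^ (-a) * exp (-(t * s))
      = s ^ (-a - 1) * (exp (-(c * s)) - exp (-(d * s))) := by
  rw [← intervalIntegral.integral_of_le hcd, intervalIntegral.integral_const_mul,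
    integral_exp_neg_mul hs.ne', rpow_sub_one hs.ne', mul_div_assoc', div_mul_eq_mul_div]

theorem integrable_rpow_neg_mul_exp_neg_mul_prod (ha : a < 1) (hc : 0 < c) :
    Integrable (fun p : ℝ × ℝ ↦ p.2 ^ (-a) * exp (-(p.1 * p.2)))
      ((volume.restrict (Ioc c d)).prod (volume.restrict (Ioi 0))) := by
  have hpos : ∀ t ∈ Ioc c d, 0 < t := fun t ht ↦ hc.trans ht.1
  refine (integrable_prod_iff (by fun_prop)).2 ⟨?_, ?_⟩
  · filter_upwards [ae_restrict_mem measurableSet_Ioc] with t ht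
    exact integrableOn_rpow_neg_mul_exp_neg_mul_Ioi ha (hpos t ht)
  · refine IntegrableOn.congr_fun (f := fun t ↦ Gamma (1 - a) * t ^ (a - 1)) ?_ (fun t ht ↦ ?_)
      measurableSet_Ioc
    · refine (ContinuousOn.integrableOn_Icc ?_).mono_set Ioc_subset_Icc_self
      exact continuousOn_const.mul <|
        continuousOn_id.rpow_const fun t ht ↦ .inl (hc.trans_le ht.1).ne'
    · dsimp only
      rw [← integral_rpow_neg_mul_exp_neg_mul_Ioi ha (hpos t ht)]
      refine setIntegral_congr_fun measurableSet_Ioi fun s hs ↦ ?_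
      exact (norm_of_nonneg (mul_nonneg (rpow_nonneg (le_of_lt hs) _) (exp_pos _).le)).symm

theorem integrableOn_rpow_mul_exp_neg_mul_sub_exp_neg_mul (ha : a < 1) (hc : 0 < c)
    (hcd : c ≤ d) :
    IntegrableOn (fun s ↦ s ^ (-a - 1) * (exp (-(c * s)) - exp (-(d * s)))) (Ioi 0) :=
  IntegrableOn.congr_fun (integrable_rpow_neg_mul_exp_neg_mul_prod ha hc).integral_prod_right
    (fun _ hs ↦ setIntegral_Ioc_rpow_neg_mul_exp_neg_mul hs hcd) measurableSet_Ioi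

theorem integral_rpow_mul_exp_neg_mul_sub_exp_neg_mul (ha : a < 1) (hc : 0 < c) (hcd : c ≤ d) :
    ∫ s in Ioi 0, s ^ (-a - 1) * (exp (-(c * s)) - exp (-(d * s)))
      = Gamma (1 - a) * ∫ t in c..d, t ^ (a - 1) := by
  calc ∫ s in Ioi 0, s ^ (-a - 1) * (exp (-(c * s)) - exp (-(d * s)))
      = ∫ s in Ioi 0, ∫ t in Ioc c d, s ^ (-a) * exp (-(t * s)) :=
        setIntegral_congr_fun measurableSet_Ioi fun _ hs ↦
          (setIntegral_Ioc_rpow_neg_mul_exp_neg_mul hs hcd).symm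
    _ = ∫ t in Ioc c d, ∫ s in Ioi 0, s ^ (-a) * exp (-(t * s)) :=
        (integral_integral_swap (integrable_rpow_neg_mul_exp_neg_mul_prod ha hc)).symm
    _ = ∫ t in Ioc c d, Gamma (1 - a) * t ^ (a - 1) :=
        setIntegral_congr_fun measurableSet_Ioc fun _ ht ↦
          integral_rpow_neg_mul_exp_neg_mul_Ioi ha (hc.trans ht.1)
    _ = Gamma (1 - a) * ∫ t in c..d, t ^ (a - 1) := by
        rw [integral_const_mul, intervalIntegral.integral_of_le hcd]

end LevyKernel

/-- Lévy–Khintchine exponent of the generalized gamma process: for a < 1, a ≠ 0,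
c > 0 and φ ≥ 0, the integral ∫_0^∞ (1 − e^{−φs})·(1/Γ(1−a))·s^{−a−1} e^{−cs} ds
is finite and equals ((c+φ)^a − c^a)/a. -/
theorem generalized_gamma_levy_exponent (a c φ : ℝ) (ha : a < 1) (ha0 : a ≠ 0)
    (hc : 0 < c) (hφ : 0 ≤ φ) :
    IntegrableOn
      (fun s : ℝ =>
        (1 - Real.exp (-φ * s)) * (1 / Real.Gamma (1 - a)) * s ^ (-a - 1) * Real.exp (-c * s))
      (Set.Ioi 0) ∧
    (∫ s in Set.Ioi (0 : ℝ),
        (1 - Real.exp (-φ * s)) * (1 / Real.Gamma (1 - a)) * s ^ (-a - 1) * Real.exp (-c * s))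
      = ((c + φ) ^ a - c ^ a) / a := by
  have hcd : c ≤ c + φ := le_add_of_nonneg_right hφ
  have hintegrand : (fun s : ℝ ↦
      (1 - exp (-φ * s)) * (1 / Gamma (1 - a)) * s ^ (-a - 1) * exp (-c * s))
      = fun s ↦
        (Gamma (1 - a))⁻¹ * (s ^ (-a - 1) * (exp (-(c * s)) - exp (-((c + φ) * s)))) := by
    ext s
    rw [add_mul, neg_add, exp_add]
    ring_nf
  rw [hintegrand]
  refine ⟨(integrableOn_rpow_mul_exp_neg_mul_sub_exp_neg_mul ha hc hcd).const_mul _, ?_⟩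
  have hpole : (0 : ℝ) ∉ uIcc c (c + φ) := notMem_uIcc_of_lt hc (hc.trans_le hcd)
  rw [integral_const_mul, integral_rpow_mul_exp_neg_mul_sub_exp_neg_mul ha hc hcd,
    integral_rpow (.inr ⟨by simpa [sub_eq_iff_eq_add] using ha0, hpole⟩), sub_add_cancel,
    inv_mul_cancel_left₀ (Gamma_pos_of_pos (sub_pos.2 ha)).ne']
end

section
/- For all real numbers γ0 > 0, a < 1 with a ≠ 0, 0 < p < 1 and every t ∈ [0,1], the probability generating function of the generalized negative binomial distribution satisfies Σ_{n=0}^∞ t^n · p_N(n) = exp{−γ0·[(1 − p t)^a − (1 − p)^a]/(a·p^a)}; in particular (t = 1) the values p_N(n), n = 0, 1, 2, …, sum to 1. -/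
/-!
Write `q_m = Γ(m - a) / (m! Γ(1 - a))`. Since `Γ(m - a) = (-a)(1 - a)⋯(m - 1 - a) Γ(-a)`, the number
`-a q_m` is the `m`-th coefficient of the binomial series of `(1 - x)^a`, so
`∑_{m ≥ 1} q_m x^m = (1 - (1 - x)^a) / a =: S(x)` for `0 ≤ x < 1`. For `a < 1` every `q_m` with
`m ≥ 1` is positive, so the double series
`∑_n x^n/n! D_n = ∑_n ∑_ℓ (γ0 p^{-a})^ℓ/ℓ! ∑ ∏ q_{n_k} x^{n_k}` may be summed over `ℓ` first; for fixed `ℓ` the compositions of all `n` into `ℓ` positive parts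
reassemble into `S(x)^ℓ`, and the sum over `ℓ` is `exp(γ0 p^{-a} S(x))`. Taking `x = p t` and
multiplying by the normalising factor of `p_N` gives the generating function.
-/

open scoped Classical BigOperators

/-- `D_n = Σ_{ℓ=0}^n γ0^ℓ · p^{−a·ℓ} · S_a(n,ℓ)`. -/
noncomputable def Dsum (γ0 a p : ℝ) (n : ℕ) : ℝ :=
  ∑ l ∈ Finset.range (n + 1), γ0 ^ l * p ^ (-(a * (l : ℝ))) * genStirling a n l

/-- The generalized negative binomial probability mass function
`p_N(n) = (p^n/n!) · exp(−γ0·(1 − (1−p)^a)/(a·p^a)) · D_n`. -/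
noncomputable def gnbPMF (γ0 a p : ℝ) (n : ℕ) : ℝ :=
  p ^ n / (n.factorial : ℝ) * Real.exp (-γ0 * (1 - (1 - p) ^ a) / (a * p ^ a)) *
    Dsum γ0 a p n

open scoped ENNReal

theorem Real.Gamma_add_nat_eq_ascPochhammer_mul {s : ℝ} (hs : ∀ k : ℕ, s + k ≠ 0) (n : ℕ) :
    Real.Gamma (s + n) = (ascPochhammer ℝ n).eval s * Real.Gamma s := by
  induction n with
  | zero => simp
  | succ n ih =>
    rw [Nat.cast_succ, ← add_assoc, Real.Gamma_add_one (hs n), ih, ascPochhammer_succ_eval]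
    ring

theorem Ring.choose_eq_ascPochhammer_div_factorial {K : Type*} [Field K] [CharZero K] (a : K)
    (n : ℕ) : Ring.choose (a + n - 1) n = (ascPochhammer K n).eval a / n.factorial := by
  rw [← Ring.multichoose_eq, eq_div_iff (Nat.cast_ne_zero.2 n.factorial_ne_zero), mul_comm,
    ← nsmul_eq_mul,
    Ring.factorial_nsmul_multichoose_eq_ascPochhammer, Polynomial.ascPochhammer_smeval_eq_eval]

theorem Real.hasSum_ascPochhammer_div_factorial_mul_pow (a : ℝ) {x : ℝ} (hx : |x| < 1) :
    HasSum (fun n => (ascPochhammer ℝ n).eval a / n.factorial * x ^ n) ((1 - x) ^ (-a)) := by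
  have hx' : 0 < 1 - x := by linarith [le_abs_self x]
  have := (Real.one_div_one_sub_rpow_hasFPowerSeriesOnBall_zero a).hasSum
    (y := x) (by simpa [Metric.mem_eball, edist_dist] using hx)
  simpa [FormalMultilinearSeries.ofScalars_apply_eq, Ring.choose_eq_ascPochhammer_div_factorial,
    Real.rpow_neg hx'.le, mul_comm] using this

noncomputable def stirlingWeight (a : ℝ) (m : ℕ) : ℝ :=
  Real.Gamma (m - a) / (m.factorial * Real.Gamma (1 - a))

theorem stirlingWeight_pos {a : ℝ} (ha : a < 1) (m : ℕ) : 0 < stirlingWeight a (m + 1) := by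
  have hm : 0 < ((m + 1 : ℕ) : ℝ) - a := by push_cast; linarith [m.cast_nonneg (α := ℝ)]
  exact div_pos (Real.Gamma_pos_of_pos hm)
    (mul_pos (by positivity) (Real.Gamma_pos_of_pos (sub_pos.2 ha)))

theorem stirlingWeight_eq_ascPochhammer {a : ℝ} (ha : ∀ k : ℕ, a ≠ k) (m : ℕ) :
    stirlingWeight a m = -((ascPochhammer ℝ m).eval (-a) / m.factorial) / a := by
  have hs : ∀ k : ℕ, -a + k ≠ 0 := fun k h => ha k (by linarith)
  have hΓ : Real.Gamma (-a) ≠ 0 := Real.Gamma_ne_zero fun k h => hs k (by rw [h]; ring)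
  have ha0 : a ≠ 0 := by simpa using ha 0
  have hΓ1 : Real.Gamma (1 - a) = -a * Real.Gamma (-a) := by
    rw [← Real.Gamma_add_one (neg_ne_zero.2 ha0)]; ring_nf
  rw [stirlingWeight, sub_eq_neg_add, Real.Gamma_add_nat_eq_ascPochhammer_mul hs, hΓ1]
  field_simp

theorem hasSum_stirlingWeight_mul_pow {a : ℝ} (ha : ∀ k : ℕ, a ≠ k) {x : ℝ} (hx : |x| < 1) :
    HasSum (fun m => stirlingWeight a (m + 1) * x ^ (m + 1)) ((1 - (1 - x) ^ a) / a) := by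
  have hbinom := (Real.hasSum_ascPochhammer_div_factorial_mul_pow (-a) hx).neg.div_const a
  rw [neg_neg] at hbinom
  have hall : HasSum (fun m => stirlingWeight a m * x ^ m) (-(1 - x) ^ a / a) :=
    hbinom.congr_fun fun m => by rw [stirlingWeight_eq_ascPochhammer ha]; ring
  have hq0 : stirlingWeight a 0 = -1 / a := by simp [stirlingWeight_eq_ascPochhammer ha]
  have htail := (hasSum_nat_add_iff' 1).2 hall
  rwa [Finset.sum_range_one, hq0, pow_zero, mul_one,
    show -(1 - x) ^ a / a - -1 / a = (1 - (1 - x) ^ a) / a by ring] at htail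

theorem ENNReal.tsum_pi_fin_prod {ι : Type*} (w : ι → ℝ≥0∞) (l : ℕ) :
    ∑' g : Fin l → ι, ∏ k, w (g k) = (∑' i, w i) ^ l := by
  induction l with
  | zero => simp
  | succ l ih =>
    rw [pow_succ', ← ih, ← ENNReal.tsum_mul_right, ← (Fin.consEquiv fun _ => ι).tsum_eq,
      ENNReal.tsum_prod']
    simp [Fin.consEquiv, Fin.prod_univ_succ, ENNReal.tsum_mul_left]

theorem ENNReal.tsum_sum_antidiagonalTuple (l : ℕ) (F : (Fin l → ℕ) → ℝ≥0∞) :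
    ∑' n, ∑ f ∈ Finset.Nat.antidiagonalTuple l n, F f = ∑' f, F f := by
  rw [← ENNReal.tsum_fiberwise F fun f => ∑ k, f k]
  refine tsum_congr fun n => ?_
  have hfiber : (fun f : Fin l → ℕ => ∑ k, f k) ⁻¹' {n} = Finset.Nat.antidiagonalTuple l n := by
    ext; exact Finset.Nat.mem_antidiagonalTuple.symm
  rw [hfiber, Finset.tsum_subtype']

theorem ENNReal.hasSum_of_tsum_ofReal_eq {ι : Type*} {f : ι → ℝ} (hf : ∀ i, 0 ≤ f i) {r : ℝ}
    (hr : 0 ≤ r) (h : ∑' i, ENNReal.ofReal (f i) = ENNReal.ofReal r) : HasSum f r := by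
  have hsum := ENNReal.hasSum_toReal (h ▸ ENNReal.ofReal_ne_top)
  rw [← ENNReal.tsum_toReal_eq fun _ => ENNReal.ofReal_ne_top, h] at hsum
  simpa [ENNReal.toReal_ofReal, hf, hr] using hsum

def compositionTuples (l n : ℕ) : Finset (Fin l → ℕ) :=
  (Finset.Nat.antidiagonalTuple l n).filter fun f => ∀ k, 0 < f k

theorem le_of_mem_compositionTuples {l n : ℕ} {f : Fin l → ℕ} (hf : f ∈ compositionTuples l n) :
    l ≤ n := by
  rw [compositionTuples, Finset.mem_filter, Finset.Nat.mem_antidiagonalTuple] at hf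
  calc l = ∑ _k : Fin l, 1 := by simp
    _ ≤ ∑ k, f k := Finset.sum_le_sum fun k _ => hf.2 k
    _ = n := hf.1

theorem ENNReal.tsum_sum_compositionTuples_prod (w : ℕ → ℝ≥0∞) (l : ℕ) :
    ∑' n, ∑ f ∈ compositionTuples l n, ∏ k, w (f k) = (∑' m, w (m + 1)) ^ l := by
  calc _ = ∑' n, ∑ f ∈ Finset.Nat.antidiagonalTuple l n,
          ∏ k, (if 0 < f k then w (f k) else 0) := by
        simp_rw [compositionTuples, Finset.sum_filter, Fintype.prod_ite_zero]
        congr!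
    _ = (∑' m, if 0 < m then w m else 0) ^ l := by
        rw [ENNReal.tsum_sum_antidiagonalTuple,
          ENNReal.tsum_pi_fin_prod (fun m => if 0 < m then w m else 0)]
    _ = (∑' m, w (m + 1)) ^ l := by
        rw [tsum_eq_zero_add' ENNReal.summable]
        simp

theorem Real.hasSum_exp_of_compositionTuples {c S : ℝ} (hc : 0 ≤ c) {w : ℕ → ℝ}
    (hw : ∀ m, 0 ≤ w (m + 1)) (hS : HasSum (fun m => w (m + 1)) S) :
    HasSum (fun n => ∑ l ∈ Finset.range (n + 1),
        c ^ l / l.factorial * ∑ f ∈ compositionTuples l n, ∏ k, w (f k))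
      (Real.exp (c * S)) := by
  have hw_comp : ∀ l n, ∀ f ∈ compositionTuples l n, ∀ k, 0 ≤ w (f k) := fun l n f hf k => by
    simpa [Nat.sub_add_cancel ((Finset.mem_filter.1 hf).2 k)] using hw (f k - 1)
  have hterm : ∀ n l, 0 ≤ c ^ l / l.factorial * ∑ f ∈ compositionTuples l n, ∏ k, w (f k) :=
    fun n l => mul_nonneg (by positivity) (Finset.sum_nonneg fun f hf =>
      Finset.prod_nonneg fun k _ => hw_comp l n f hf k)
  have hofReal : ∀ n, ENNReal.ofReal (∑ l ∈ Finset.range (n + 1),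
      c ^ l / l.factorial * ∑ f ∈ compositionTuples l n, ∏ k, w (f k)) =
      ∑' l, ENNReal.ofReal (c ^ l / l.factorial) *
        ∑ f ∈ compositionTuples l n, ∏ k, ENNReal.ofReal (w (f k)) := by
    intro n
    rw [ENNReal.ofReal_sum_of_nonneg fun l _ => hterm n l,
      tsum_eq_sum (s := Finset.range (n + 1)) fun l hl => ?_]
    · refine Finset.sum_congr rfl fun l _ => ?_
      rw [ENNReal.ofReal_mul (by positivity), ENNReal.ofReal_sum_of_nonneg fun f hf =>
        Finset.prod_nonneg fun k _ => hw_comp l n f hf k]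
      exact congrArg _ (Finset.sum_congr rfl fun f hf =>
        ENNReal.ofReal_prod_of_nonneg fun k _ => hw_comp l n f hf k)
    · rw [Finset.sum_eq_zero fun f hf => absurd (le_of_mem_compositionTuples hf)
        (by simpa using hl), mul_zero]
  have hS0 : 0 ≤ S := hS.nonneg hw
  have hexp := NormedSpace.expSeries_div_hasSum_exp (c * S)
  rw [← Real.exp_eq_exp_ℝ] at hexp
  refine ENNReal.hasSum_of_tsum_ofReal_eq (fun n => Finset.sum_nonneg fun l _ => hterm n l)
    (Real.exp_nonneg _) ?_
  calc _ = ∑' l, ENNReal.ofReal (c ^ l / l.factorial) *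
          ∑' n, ∑ f ∈ compositionTuples l n, ∏ k, ENNReal.ofReal (w (f k)) := by
        simp_rw [hofReal, ← ENNReal.tsum_mul_left]
        exact ENNReal.tsum_comm
    _ = ∑' l, ENNReal.ofReal ((c * S) ^ l / l.factorial) := by
        refine tsum_congr fun l => ?_
        rw [ENNReal.tsum_sum_compositionTuples_prod (fun m => ENNReal.ofReal (w m)),
          ← ENNReal.ofReal_tsum_of_nonneg hw hS.summable, hS.tsum_eq, ← ENNReal.ofReal_pow hS0,
          ← ENNReal.ofReal_mul (by positivity)]
        ring_nf
    _ = ENNReal.ofReal (Real.exp (c * S)) := by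
        rw [← ENNReal.ofReal_tsum_of_nonneg (fun l => by positivity) hexp.summable, hexp.tsum_eq]

theorem genStirling_eq_sum_compositionTuples (a : ℝ) (n l : ℕ) :
    genStirling a n l = n.factorial / l.factorial *
      ∑ f ∈ compositionTuples l n, ∏ k, stirlingWeight a (f k) := rfl

theorem pow_div_factorial_mul_Dsum {p : ℝ} (hp : 0 ≤ p) (γ0 a x : ℝ) (n : ℕ) :
    x ^ n / n.factorial * Dsum γ0 a p n = ∑ l ∈ Finset.range (n + 1),
      (γ0 * p ^ (-a)) ^ l / l.factorial *
        ∑ f ∈ compositionTuples l n, ∏ k, stirlingWeight a (f k) * x ^ f k := by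
  rw [Dsum, Finset.mul_sum]
  refine Finset.sum_congr rfl fun l _ => ?_
  have hpow : p ^ (-(a * l)) = (p ^ (-a)) ^ l := by
    rw [← Real.rpow_natCast, ← Real.rpow_mul hp, neg_mul]
  have hx : ∀ f ∈ compositionTuples l n,
      ∏ k, stirlingWeight a (f k) * x ^ f k = x ^ n * ∏ k, stirlingWeight a (f k) := by
    intro f hf
    rw [compositionTuples, Finset.mem_filter, Finset.Nat.mem_antidiagonalTuple] at hf
    rw [Finset.prod_mul_distrib, Finset.prod_pow_eq_pow_sum, hf.1, mul_comm]
  rw [genStirling_eq_sum_compositionTuples, hpow, Finset.sum_congr rfl hx, ← Finset.mul_sum]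
  field_simp
  ring

theorem hasSum_pow_div_factorial_mul_Dsum {γ0 a p x : ℝ} (hγ : 0 ≤ γ0) (ha : a < 1) (ha0 : a ≠ 0)
    (hp : 0 ≤ p) (hx0 : 0 ≤ x) (hx1 : x < 1) :
    HasSum (fun n => x ^ n / n.factorial * Dsum γ0 a p n)
      (Real.exp (γ0 * p ^ (-a) * ((1 - (1 - x) ^ a) / a))) := by
  have ha_nat : ∀ k : ℕ, a ≠ k
    | 0 => by simpa using ha0
    | k + 1 => by push_cast; linarith [k.cast_nonneg (α := ℝ)]
  simp_rw [pow_div_factorial_mul_Dsum hp]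
  exact Real.hasSum_exp_of_compositionTuples (w := fun m => stirlingWeight a m * x ^ m)
    (by positivity) (fun m => mul_nonneg (stirlingWeight_pos ha m).le (pow_nonneg hx0 _))
    (hasSum_stirlingWeight_mul_pow ha_nat (abs_lt.2 ⟨by linarith, hx1⟩))

/-- Probability generating function of the generalized negative binomial distribution:
for γ0 > 0, a < 1 with a ≠ 0, 0 < p < 1 and t ∈ [0,1],
Σ_{n=0}^∞ t^n·p_N(n) = exp{−γ0·[(1 − pt)^a − (1 − p)^a]/(a·p^a)};
in particular (t = 1) the values p_N(n) sum to 1. -/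
theorem gnb_pgf (γ0 a p : ℝ) (hγ : 0 < γ0) (ha : a < 1) (ha0 : a ≠ 0)
    (hp0 : 0 < p) (hp1 : p < 1) :
    ∀ t ∈ Set.Icc (0 : ℝ) 1,
      HasSum (fun n : ℕ => t ^ n * gnbPMF γ0 a p n)
        (Real.exp (-γ0 * ((1 - p * t) ^ a - (1 - p) ^ a) / (a * p ^ a))) := by
  rintro t ⟨ht0, ht1⟩
  have hpt : p * t < 1 := (mul_le_of_le_one_right hp0.le ht1).trans_lt hp1
  have h := (hasSum_pow_div_factorial_mul_Dsum hγ.le ha ha0 hp0.le (by positivity) hpt).mul_left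
    (Real.exp (-γ0 * (1 - (1 - p) ^ a) / (a * p ^ a)))
  have hexponent : -γ0 * (1 - (1 - p) ^ a) / (a * p ^ a) +
      γ0 * p ^ (-a) * ((1 - (1 - p * t) ^ a) / a) =
      -γ0 * ((1 - p * t) ^ a - (1 - p) ^ a) / (a * p ^ a) := by
    rw [Real.rpow_neg hp0.le]
    field_simp
    ring
  rw [← Real.exp_add, hexponent] at h
  exact h.congr_fun fun n => by rw [gnbPMF, mul_pow]; ring
end

section
/- For every integer n ≥ 1 and all real numbers γ0 > 0, a < 1, 0 < p < 1, one has the identity Σ_{ℓ=0}^n γ0^ℓ · p^{−a·ℓ} · S_a(n,ℓ) = γ0 · p^{−a} · R_{n,γ0,a,p}(1,1). -/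
open scoped Classical BigOperators

/-- The backward recursion `R_{n,γ0,a,p}(i,j)`: `R(n,j) = 1` and
`R(i,j) = (i − a·j)·R(i+1,j) + γ0·p^{−a}·R(i+1,j+1)` for `i < n`. -/
noncomputable def Rrec (γ0 a p : ℝ) (n : ℕ) : ℕ → ℕ → ℝ
  | i, j =>
    if _ : n ≤ i then 1
    else ((i : ℝ) - a * (j : ℝ)) * Rrec γ0 a p n (i + 1) j
      + γ0 * p ^ (-a) * Rrec γ0 a p n (i + 1) (j + 1)
  termination_by i _ => n - i
  decreasing_by all_goals omega

/-!
Write `x = γ0 p^{-a}` and `w(m) = Γ(m - a) / (m! Γ(1 - a))`. Splitting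
`(n + 1) Σ ∏ w(n_k) = Σ_k Σ n_k ∏ w(n_k)` according to whether the `k`-th part is `1` (delete it)
or larger (decrement it, using `(m + 1) w(m + 1) = (m - a) w(m)`) gives the forward recursion
`S_a(i + 1, j) = (i - a j) S_a(i, j) + S_a(i, j - 1)`. It is the transpose of the backward
recursion defining `R`, so `Σ_j x^j S_a(i, j) R(i, j)` does not depend on `i ∈ [1, n]`: at `i = n`
it is the left-hand side, and at `i = 1`, where `S_a(1, j) = δ_{j1}`, it is `x R(1, 1)`.
-/

def positiveTuples (l n : ℕ) : Finset (Fin l → ℕ) :=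
  (Finset.Nat.antidiagonalTuple l n).filter (fun f => ∀ k, 0 < f k)

theorem mem_positiveTuples {l n : ℕ} {f : Fin l → ℕ} :
    f ∈ positiveTuples l n ↔ ∑ k, f k = n ∧ ∀ k, 0 < f k := by
  simp [positiveTuples, Finset.Nat.mem_antidiagonalTuple]

theorem positiveTuples_eq_empty_of_lt {l n : ℕ} (h : n < l) : positiveTuples l n = ∅ := by
  refine Finset.eq_empty_of_forall_notMem fun f hf => ?_
  obtain ⟨hsum, hpos⟩ := mem_positiveTuples.mp hf
  have : l ≤ ∑ k, f k := by
    simpa using Finset.card_nsmul_le_sum Finset.univ f 1 fun k _ => hpos k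
  omega

theorem sum_update_add_self {l : ℕ} (f : Fin l → ℕ) (k : Fin l) (b : ℕ) :
    ∑ k', Function.update f k b k' + f k = ∑ k', f k' + b := by
  rw [Finset.sum_update_of_mem (Finset.mem_univ k),
    Finset.sum_eq_add_sum_sdiff_singleton_of_mem (Finset.mem_univ k) f]
  ring

section Bijections

variable {M : Type*} [AddCommMonoid M] {l n : ℕ}

theorem sum_positiveTuples_filter_eq_one (k : Fin (l + 1)) (φ : (Fin (l + 1) → ℕ) → M) :
    ∑ g ∈ (positiveTuples (l + 1) (n + 1)).filter (fun g => g k = 1), φ g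
      = ∑ h ∈ positiveTuples l n, φ (k.insertNth 1 h) := by
  refine Finset.sum_nbij' (k.removeNth ·) (k.insertNth 1 ·) ?_ ?_ ?_ ?_ ?_
  · intro g hg
    obtain ⟨hg, hgk⟩ := Finset.mem_filter.mp hg
    obtain ⟨hsum, hpos⟩ := mem_positiveTuples.mp hg
    rw [Fin.sum_univ_succAbove g k, hgk] at hsum
    exact mem_positiveTuples.mpr ⟨by simp only [Fin.removeNth]; omega, fun _ => hpos _⟩
  · intro h hh
    obtain ⟨hsum, hpos⟩ := mem_positiveTuples.mp hh
    refine Finset.mem_filter.mpr ⟨mem_positiveTuples.mpr ⟨?_, fun k' => ?_⟩, by simp⟩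
    · simp [Fin.sum_univ_succAbove _ k, hsum, Nat.add_comm]
    · exact k.succAboveCases (by simp) (fun i => by simp [hpos]) k'
  · intro g hg
    simpa [Fin.insertNth_removeNth] using (Finset.mem_filter.mp hg).2.symm
  · intro h _
    simp
  · intro g hg
    congr 1
    simpa [Fin.insertNth_removeNth, eq_comm] using (Finset.mem_filter.mp hg).2

theorem sum_positiveTuples_filter_ne_one (k : Fin (l + 1)) (φ : (Fin (l + 1) → ℕ) → M) :
    ∑ g ∈ (positiveTuples (l + 1) (n + 1)).filter (fun g => g k ≠ 1), φ g
      = ∑ f ∈ positiveTuples (l + 1) n, φ (Function.update f k (f k + 1)) := by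
  symm
  refine Finset.sum_nbij' (fun f => Function.update f k (f k + 1))
    (fun g => Function.update g k (g k - 1)) ?_ ?_ ?_ ?_ (fun _ _ => rfl)
  · intro f hf
    obtain ⟨hsum, hpos⟩ := mem_positiveTuples.mp hf
    have hupd := sum_update_add_self f k (f k + 1)
    refine Finset.mem_filter.mpr ⟨mem_positiveTuples.mpr ⟨by omega, fun k' => ?_⟩, ?_⟩
    · rcases eq_or_ne k' k with rfl | hne
      · simp
      · simpa [Function.update_of_ne hne] using hpos k'
    · simpa using (hpos k).ne'
  · intro g hg
    obtain ⟨hg, hgk⟩ := Finset.mem_filter.mp hg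
    obtain ⟨hsum, hpos⟩ := mem_positiveTuples.mp hg
    have hk := hpos k
    have hupd := sum_update_add_self g k (g k - 1)
    refine mem_positiveTuples.mpr ⟨by omega, fun k' => ?_⟩
    rcases eq_or_ne k' k with rfl | hne
    · simp; omega
    · simpa [Function.update_of_ne hne] using hpos k'
  · intro f _
    simp
  · intro g hg
    have hk := (mem_positiveTuples.mp (Finset.mem_filter.mp hg).1).2 k
    rw [Function.update_idem, Function.update_self, Nat.sub_add_cancel hk, Function.update_eq_self]

end Bijections

section WeightedCompositions

variable {R : Type*} [CommRing R] (w : ℕ → R)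

def compositionWeightSum (n l : ℕ) : R :=
  ∑ f ∈ positiveTuples l n, ∏ k, w (f k)

variable {w} {a : R} (hw1 : w 1 = 1)
  (hw : ∀ m : ℕ, 0 < m → ((m : R) + 1) * w (m + 1) = (m - a) * w m)
include hw1 hw

theorem sum_apply_mul_prod_positiveTuples_succ {l : ℕ} (n : ℕ) (k : Fin (l + 1)) :
    ∑ g ∈ positiveTuples (l + 1) (n + 1), (g k : R) * ∏ k', w (g k')
      = ∑ f ∈ positiveTuples (l + 1) n, ((f k : R) - a) * ∏ k', w (f k')
        + compositionWeightSum w n l := by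
  rw [← Finset.sum_filter_add_sum_filter_not _ (fun g => g k = 1),
    sum_positiveTuples_filter_eq_one, sum_positiveTuples_filter_ne_one, add_comm]
  congr 1
  · refine Finset.sum_congr rfl fun f hf => ?_
    have hk := (mem_positiveTuples.mp hf).2 k
    simp_rw [Function.update_self, Function.apply_update (fun _ => w)]
    rw [Finset.prod_update_of_mem (Finset.mem_univ k),
      Finset.prod_eq_mul_prod_sdiff_singleton_of_mem (Finset.mem_univ k) (fun k' => w (f k'))]
    push_cast
    linear_combination (∏ k' ∈ Finset.univ \ {k}, w (f k')) * hw (f k) hk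
  · refine Finset.sum_congr rfl fun h _ => ?_
    simp [Fin.prod_univ_succAbove _ k, hw1]

theorem succ_mul_compositionWeightSum_succ_succ (n l : ℕ) :
    ((n : R) + 1) * compositionWeightSum w (n + 1) (l + 1)
      = ((n : R) - a * ((l : R) + 1)) * compositionWeightSum w n (l + 1)
        + ((l : R) + 1) * compositionWeightSum w n l := by
  have hsum : ∀ {m : ℕ} {f : Fin (l + 1) → ℕ}, f ∈ positiveTuples (l + 1) m →
      ∑ k, (f k : R) = m := fun hf => by
    rw [← Nat.cast_sum, (mem_positiveTuples.mp hf).1]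
  calc ((n : R) + 1) * compositionWeightSum w (n + 1) (l + 1)
      = ∑ k, ∑ g ∈ positiveTuples (l + 1) (n + 1), (g k : R) * ∏ k', w (g k') := by
        rw [Finset.sum_comm, compositionWeightSum, Finset.mul_sum]
        refine Finset.sum_congr rfl fun g hg => ?_
        rw [← Finset.sum_mul, hsum hg]
        push_cast; ring
    _ = ∑ k, ∑ f ∈ positiveTuples (l + 1) n, ((f k : R) - a) * ∏ k', w (f k')
        + ((l : R) + 1) * compositionWeightSum w n l := by
        simp [sum_apply_mul_prod_positiveTuples_succ hw1 hw, Finset.sum_add_distrib]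
    _ = _ := by
        rw [Finset.sum_comm]
        congr 1
        rw [compositionWeightSum, Finset.mul_sum]
        refine Finset.sum_congr rfl fun f hf => ?_
        rw [← Finset.sum_mul, Finset.sum_sub_distrib, hsum hf]
        simp; ring

end WeightedCompositions

noncomputable def gammaWeight (a : ℝ) (m : ℕ) : ℝ :=
  Real.Gamma ((m : ℝ) - a) / ((m.factorial : ℝ) * Real.Gamma (1 - a))

theorem genStirling_eq_compositionWeightSum (a : ℝ) (n l : ℕ) :
    genStirling a n l = n.factorial / l.factorial * compositionWeightSum (gammaWeight a) n l :=
  rfl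

theorem gammaWeight_one {a : ℝ} (ha : a < 1) : gammaWeight a 1 = 1 := by
  have : Real.Gamma (1 - a) ≠ 0 := (Real.Gamma_pos_of_pos (by linarith)).ne'
  simp [gammaWeight, this]

theorem succ_mul_gammaWeight_succ {a : ℝ} (ha : a < 1) {m : ℕ} (hm : 0 < m) :
    ((m : ℝ) + 1) * gammaWeight a (m + 1) = (m - a) * gammaWeight a m := by
  have hma : (m : ℝ) - a ≠ 0 := by
    have : (1 : ℝ) ≤ m := by exact_mod_cast hm
    linarith
  have hGamma : Real.Gamma ((m + 1 : ℕ) - a) = (m - a) * Real.Gamma (m - a) := by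
    rw [← Real.Gamma_add_one hma]; push_cast; ring_nf
  simp only [gammaWeight, hGamma, Nat.factorial_succ]
  push_cast
  field_simp

theorem genStirling_zero_zero (a : ℝ) : genStirling a 0 0 = 1 := by
  simp [genStirling, Finset.Nat.antidiagonalTuple_zero_zero]

theorem genStirling_succ_zero (a : ℝ) (n : ℕ) : genStirling a (n + 1) 0 = 0 := by
  simp [genStirling, Finset.Nat.antidiagonalTuple_zero_succ]

theorem genStirling_eq_zero_of_lt (a : ℝ) {n l : ℕ} (h : n < l) : genStirling a n l = 0 := by
  rw [genStirling_eq_compositionWeightSum, compositionWeightSum,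
    positiveTuples_eq_empty_of_lt h, Finset.sum_empty, mul_zero]

theorem genStirling_succ_succ {a : ℝ} (ha : a < 1) (n l : ℕ) :
    genStirling a (n + 1) (l + 1)
      = (n - a * (l + 1)) * genStirling a n (l + 1) + genStirling a n l := by
  have hrec := succ_mul_compositionWeightSum_succ_succ (gammaWeight_one ha)
    (fun _ hm => succ_mul_gammaWeight_succ ha hm) n l
  simp only [genStirling_eq_compositionWeightSum, Nat.factorial_succ]
  push_cast
  field_simp
  linear_combination hrec

theorem genStirling_one_one {a : ℝ} (ha : a < 1) : genStirling a 1 1 = 1 := by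
  simpa [genStirling_zero_zero, genStirling_eq_zero_of_lt] using genStirling_succ_succ ha 0 0

theorem sum_genStirling_succ_mul {a : ℝ} (ha : a < 1) (x : ℝ) (r : ℕ → ℝ) {i N : ℕ}
    (hi : 0 < i) (hiN : i < N) :
    ∑ j ∈ Finset.range (N + 1), x ^ j * genStirling a (i + 1) j * r j
      = ∑ j ∈ Finset.range (N + 1),
          x ^ j * genStirling a i j * ((i - a * j) * r j + x * r (j + 1)) := by
  obtain ⟨m, rfl⟩ : ∃ m, i = m + 1 := ⟨i - 1, by omega⟩
  calc ∑ j ∈ Finset.range (N + 1), x ^ j * genStirling a (m + 1 + 1) j * r j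
      = ∑ j ∈ Finset.range N,
          x ^ (j + 1) * genStirling a (m + 1) (j + 1) * ((m + 1 - a * (j + 1)) * r (j + 1))
        + ∑ j ∈ Finset.range N, x ^ j * genStirling a (m + 1) j * (x * r (j + 1)) := by
        rw [Finset.sum_range_succ', genStirling_succ_zero, ← Finset.sum_add_distrib]
        simp only [mul_zero, zero_mul, add_zero]
        refine Finset.sum_congr rfl fun j _ => ?_
        rw [genStirling_succ_succ ha]
        push_cast
        ring
    _ = _ := by
        simp only [mul_add, Finset.sum_add_distrib]
        rw [Finset.sum_range_succ' (fun j => x ^ j * genStirling a (m + 1) j * _),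
          Finset.sum_range_succ (fun j => x ^ j * genStirling a (m + 1) j * (x * r (j + 1))),
          genStirling_succ_zero, genStirling_eq_zero_of_lt a hiN]
        simp only [mul_zero, zero_mul, add_zero]
        congr 1
        refine Finset.sum_congr rfl fun j _ => ?_
        push_cast
        ring

section Transfer

variable (γ0 a p : ℝ) {n i : ℕ}

theorem Rrec_of_le (j : ℕ) (h : n ≤ i) : Rrec γ0 a p n i j = 1 := by
  rw [Rrec, dif_pos h]

theorem Rrec_of_lt (j : ℕ) (h : i < n) :
    Rrec γ0 a p n i j = ((i : ℝ) - a * j) * Rrec γ0 a p n (i + 1) j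
      + γ0 * p ^ (-a) * Rrec γ0 a p n (i + 1) (j + 1) := by
  rw [Rrec, dif_neg (by omega)]

theorem sum_genStirling_mul_Rrec (ha : a < 1) (hi : 0 < i) (hin : i ≤ n) :
    ∑ l ∈ Finset.range (n + 1), (γ0 * p ^ (-a)) ^ l * genStirling a n l
      = ∑ j ∈ Finset.range (n + 1),
          (γ0 * p ^ (-a)) ^ j * genStirling a i j * Rrec γ0 a p n i j := by
  induction hin using Nat.decreasingInduction with
  | self => simp [Rrec_of_le]
  | of_succ k hk ih =>
    rw [ih k.succ_pos, sum_genStirling_succ_mul ha _ _ hi hk]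
    simp [Rrec_of_lt γ0 a p _ hk]

end Transfer

theorem Dsum_eq_sum_pow (γ0 a : ℝ) {p : ℝ} (hp : 0 ≤ p) (n : ℕ) :
    Dsum γ0 a p n = ∑ l ∈ Finset.range (n + 1), (γ0 * p ^ (-a)) ^ l * genStirling a n l := by
  refine Finset.sum_congr rfl fun l _ => ?_
  rw [mul_pow, ← Real.rpow_mul_natCast hp, neg_mul]

theorem Dsum_eq_Rrec_general (n : ℕ) (hn : 1 ≤ n) (γ0 a p : ℝ)
    (ha : a < 1) (hp0 : 0 < p) :
    Dsum γ0 a p n = γ0 * p ^ (-a) * Rrec γ0 a p n 1 1 := by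
  rw [Dsum_eq_sum_pow γ0 a hp0.le, sum_genStirling_mul_Rrec γ0 a p ha one_pos hn,
    Finset.sum_eq_single 1]
  · simp [genStirling_one_one ha]
  · intro j _ hj
    rcases Nat.lt_or_gt_of_ne hj with h | h
    · simp [Nat.lt_one_iff.mp h, show genStirling a 1 0 = 0 from genStirling_succ_zero a 0]
    · simp [genStirling_eq_zero_of_lt a h]
  · intro h
    exact absurd (Finset.mem_range.mpr (by omega)) h

/-- For n ≥ 1, γ0 > 0, a < 1, 0 < p < 1:
Σ_{ℓ=0}^n γ0^ℓ·p^{−a·ℓ}·S_a(n,ℓ) = γ0·p^{−a}·R_{n,γ0,a,p}(1,1). -/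
theorem Dsum_eq_Rrec (n : ℕ) (hn : 1 ≤ n) (γ0 a p : ℝ)
    (hγ : 0 < γ0) (ha : a < 1) (hp0 : 0 < p) (hp1 : p < 1) :
    Dsum γ0 a p n = γ0 * p ^ (-a) * Rrec γ0 a p n 1 1 :=
  Dsum_eq_Rrec_general n hn γ0 a p ha hp0
end

section
/- Let n ≥ 2 be an integer, let γ0 > 0, a < 1, 0 < p < 1 be real, and let σ be a set partition of {1,…,n−1} with l blocks. Then the sum of w_n(π) over all set partitions π of {1,…,n} whose restriction to {1,…,n−1} equals σ (i.e., π is obtained from σ by either adding {n} as a new singleton block or inserting n into one of the l blocks of σ) equals w_{n−1}(σ) · (D_{n−1}/D_n) · [γ0·p^{−a} + (n−1) − a·l]. In particular, unless this correction factor equals 1, the family of exchangeable partition probability functions w_n violates the addition rule of a partition structure, so the partition distribution depends on the sample size n. -/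
open scoped Classical BigOperators

/-- A finite family of blocks forming a set partition of `Fin n`. -/
def IsPartition {n : ℕ} (P : Finset (Finset (Fin n))) : Prop :=
  ∅ ∉ P ∧ ∀ x : Fin n, ∃! B, B ∈ P ∧ x ∈ B

/-- The finite set of all set partitions of `{1,…,n}` (modeled as `Fin n`). -/
noncomputable def partitionsOf (n : ℕ) : Finset (Finset (Finset (Fin n))) :=
  Finset.univ.filter IsPartition

/-- The generalized Chinese restaurant sampling formula weight of a family of blocks
`P`, for sample size `m`:
`w_m(P) = γ0^{|P|} · p^{−a·|P|} · ∏_{B∈P} Γ(|B|−a)/Γ(1−a) / D_m`. -/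
noncomputable def crsfW (γ0 a p : ℝ) (m : ℕ) {n : ℕ} (P : Finset (Finset (Fin n))) : ℝ :=
  γ0 ^ P.card * p ^ (-(a * (P.card : ℝ))) *
    (∏ B ∈ P, Real.Gamma ((B.card : ℝ) - a) / Real.Gamma (1 - a)) / Dsum γ0 a p m

/-- The restriction of a family of blocks to the first `i` elements of `Fin n`:
intersect each block with `{x | x < i}` and drop the empty pieces. -/
noncomputable def restrictFirst (n i : ℕ) (P : Finset (Finset (Fin n))) :
    Finset (Finset (Fin n)) :=
  (P.image fun B => B.filter fun x => (x : ℕ) < i).filter fun B => B.Nonempty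

/-- A set partition of the first `i` elements of `Fin n`. -/
def IsPartitionOn (n i : ℕ) (P : Finset (Finset (Fin n))) : Prop :=
  ∅ ∉ P ∧ (∀ B ∈ P, ∀ x ∈ B, (x : ℕ) < i) ∧
    ∀ x : Fin n, (x : ℕ) < i → ∃! B, B ∈ P ∧ x ∈ B

/-!
A partition of `{1,…,n}` restricting to `σ` is obtained from `σ` by putting `n` either into one
of its blocks `B` or into a new block, and these choices give distinct partitions. Joining `B`
multiplies the unnormalised weight by `Γ(|B|+1−a)/Γ(|B|−a) = |B| − a`, opening a new block by
`γ0·p^{−a}`; since the blocks of `σ` have `n − 1` elements in total, the factors add up to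
`γ0·p^{−a} + (n − 1) − a·l`. The ratio `D_{n−1}/D_n` accounts for the change of normalisation;
it needs `D_{n−1} > 0`, which holds because every `S_a(n,l)` is nonnegative and `S_a(n,n) > 0`.
-/

open Finset

section Insertion

variable {α : Type*} [DecidableEq α] {t : α} {σ : Finset (Finset α)} {B : Finset α}

def eraseElem (t : α) (π : Finset (Finset α)) : Finset (Finset α) :=
  (π.image (·.erase t)).filter (·.Nonempty)

/-- `B = ∅` encodes opening the new block `{t}`. -/
def insertInto (t : α) (σ : Finset (Finset α)) (B : Finset α) : Finset (Finset α) :=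
  insert (insert t B) (σ.erase B)

def IsPartitionOfCompl (t : α) (σ : Finset (Finset α)) : Prop :=
  ∅ ∉ σ ∧ (∀ B ∈ σ, t ∉ B) ∧ ∀ x, x ≠ t → ∃! B, B ∈ σ ∧ x ∈ B

theorem eraseElem_eq_self (h0 : ∅ ∉ σ) (ht : ∀ B ∈ σ, t ∉ B) : eraseElem t σ = σ := by
  unfold eraseElem
  rw [(image_congr fun B hB => erase_eq_of_notMem (ht B hB)).trans image_id]
  exact filter_true_of_mem fun B hB => nonempty_iff_ne_empty.2 (ne_of_mem_of_not_mem hB h0)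

theorem eraseElem_insert (X : Finset α) (π : Finset (Finset α)) :
    eraseElem t (insert X π) =
      if (X.erase t).Nonempty then insert (X.erase t) (eraseElem t π) else eraseElem t π := by
  simp only [eraseElem, image_insert, filter_insert]

theorem insertInto_empty (h0 : ∅ ∉ σ) : insertInto t σ ∅ = insert {t} σ := by
  rw [insertInto, insert_empty, erase_eq_of_notMem h0]

theorem eraseElem_insertInto (h : IsPartitionOfCompl t σ) (hB : B ∈ insert ∅ σ) :
    eraseElem t (insertInto t σ B) = σ := by
  obtain ⟨h0, ht, -⟩ := h
  have htB : t ∉ B := by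
    rcases mem_insert.1 hB with rfl | hB
    exacts [notMem_empty t, ht B hB]
  rw [insertInto, eraseElem_insert, erase_insert htB,
    eraseElem_eq_self (fun h => h0 (mem_of_mem_erase h)) fun C hC => ht C (mem_of_mem_erase hC)]
  split_ifs with hne
  · exact insert_erase ((mem_insert.1 hB).resolve_left hne.ne_empty)
  · rw [not_nonempty_iff_eq_empty.1 hne, erase_eq_of_notMem h0]

theorem insertInto_injOn (ht : ∀ B ∈ σ, t ∉ B) :
    Set.InjOn (insertInto t σ) ↑(insert ∅ σ : Finset (Finset α)) := by
  have ht' : ∀ B ∈ insert ∅ σ, t ∉ B := by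
    simpa only [forall_mem_insert] using ⟨notMem_empty t, ht⟩
  intro B hB B' hB' h
  rw [mem_coe] at hB hB'
  have hmem : insert t B ∈ insertInto t σ B' := h ▸ mem_insert_self _ _
  rcases mem_insert.1 hmem with h' | h'
  · simpa only [erase_insert (ht' B hB), erase_insert (ht' B' hB')] using congrArg (·.erase t) h'
  · exact absurd (mem_insert_self t B) (ht _ (mem_of_mem_erase h'))

theorem IsPartitionOfCompl.sum_card [Fintype α] (h : IsPartitionOfCompl t σ) :
    ∑ B ∈ σ, B.card = Fintype.card α - 1 := by
  obtain ⟨-, ht, hcover⟩ := h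
  have hdisj : (σ : Set (Finset α)).PairwiseDisjoint id := by
    intro B hB C hC hne
    refine disjoint_left.2 fun x hxB hxC => hne ?_
    exact (hcover x fun hx => ht B hB (hx ▸ hxB)).unique ⟨hB, hxB⟩ ⟨hC, hxC⟩
  have hunion : σ.biUnion id = univ.erase t := by
    ext x
    simp only [mem_biUnion, id, mem_erase, mem_univ, and_true]
    refine ⟨fun ⟨B, hB, hxB⟩ hx => ht B hB (hx ▸ hxB), fun hx => ?_⟩
    obtain ⟨B, ⟨hB, hxB⟩, -⟩ := hcover x hx
    exact ⟨B, hB, hxB⟩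
  have hcard := card_biUnion hdisj
  rw [hunion, card_erase_of_mem (mem_univ t), card_univ] at hcard
  exact hcard.symm

end Insertion

section Partitions

variable {n : ℕ} {t : Fin n} {σ π : Finset (Finset (Fin n))} {B : Finset (Fin n)}

theorem isPartition_insertInto (h : IsPartitionOfCompl t σ) (hB : B ∈ insert ∅ σ) :
    IsPartition (insertInto t σ B) := by
  obtain ⟨h0, ht, hcover⟩ := h
  have hout : ∀ x ∈ insert t B, ∀ D ∈ σ.erase B, x ∉ D := by
    intro x hx D hD hxD
    obtain ⟨hDB, hDσ⟩ := mem_erase.1 hD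
    rcases mem_insert.1 hx with rfl | hxB
    · exact ht D hDσ hxD
    · have hBσ : B ∈ σ := (mem_insert.1 hB).resolve_left (ne_empty_of_mem hxB)
      exact hDB ((hcover x fun h => ht B hBσ (h ▸ hxB)).unique ⟨hDσ, hxD⟩ ⟨hBσ, hxB⟩)
  refine ⟨fun h => ?_, fun x => ?_⟩
  · rcases mem_insert.1 h with h | h
    exacts [insert_ne_empty t B h.symm, h0 (mem_of_mem_erase h)]
  by_cases hx : x ∈ insert t B
  · refine ⟨insert t B, ⟨mem_insert_self _ _, hx⟩, fun D ⟨hD, hxD⟩ => ?_⟩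
    exact (mem_insert.1 hD).resolve_right fun hD' => hout x hx D hD' hxD
  · obtain ⟨C, ⟨hCσ, hxC⟩, hu⟩ := hcover x fun h => hx (h ▸ mem_insert_self _ _)
    have hCB : C ≠ B := fun h => hx (mem_insert_of_mem (h ▸ hxC))
    refine ⟨C, ⟨mem_insert_of_mem (mem_erase.2 ⟨hCB, hCσ⟩), hxC⟩, fun D ⟨hD, hxD⟩ => ?_⟩
    rcases mem_insert.1 hD with rfl | hD
    exacts [absurd hxD hx, hu D ⟨mem_of_mem_erase hD, hxD⟩]

theorem IsPartition.exists_eq_insertInto (hπ : IsPartition π) (t : Fin n) :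
    ∃ B ∈ insert ∅ (eraseElem t π), π = insertInto t (eraseElem t π) B := by
  obtain ⟨h0, hcover⟩ := hπ
  obtain ⟨Bt, ⟨hBt, htBt⟩, hu⟩ := hcover t
  set rest := π.erase Bt
  have hrest : eraseElem t rest = rest :=
    eraseElem_eq_self (fun h => h0 (mem_of_mem_erase h))
      fun C hC htC => (mem_erase.1 hC).1 (hu C ⟨mem_of_mem_erase hC, htC⟩)
  have hBrest : Bt.erase t ∉ rest := by
    intro h
    obtain ⟨x, hx⟩ := nonempty_iff_ne_empty.2 (ne_of_mem_of_not_mem (mem_of_mem_erase h) h0)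
    refine (mem_erase.1 h).1 ((hcover x).unique ⟨mem_of_mem_erase h, hx⟩ ⟨hBt, ?_⟩)
    exact mem_of_mem_erase hx
  have hπ : eraseElem t π =
      if (Bt.erase t).Nonempty then insert (Bt.erase t) rest else rest := by
    rw [← insert_erase hBt, eraseElem_insert, hrest]
  refine ⟨Bt.erase t, ?_, ?_⟩
  · rw [hπ]
    split_ifs with hne
    · exact mem_insert_of_mem (mem_insert_self _ _)
    · exact not_nonempty_iff_eq_empty.1 hne ▸ mem_insert_self _ _
  · have herase : (eraseElem t π).erase (Bt.erase t) = rest := by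
      rw [hπ]
      split_ifs
      exacts [erase_insert hBrest, erase_eq_of_notMem hBrest]
    rw [insertInto, herase, insert_erase htBt, insert_erase hBt]

theorem filter_eraseElem_eq (h : IsPartitionOfCompl t σ) :
    (partitionsOf n).filter (fun π => eraseElem t π = σ)
      = (insert ∅ σ).image (insertInto t σ) := by
  ext π
  simp only [mem_filter, partitionsOf, mem_univ, true_and, mem_image]
  constructor
  · rintro ⟨hπ, rfl⟩
    obtain ⟨B, hB, hπB⟩ := hπ.exists_eq_insertInto t
    exact ⟨B, hB, hπB.symm⟩
  · rintro ⟨B, hB, rfl⟩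
    exact ⟨isPartition_insertInto h hB, eraseElem_insertInto h hB⟩

end Partitions

section Weights

variable {γ0 a p : ℝ}

theorem Gamma_sub_div_factorial_mul_pos (ha : a < 1) {k : ℕ} (hk : 0 < k) :
    0 < Real.Gamma ((k : ℝ) - a) / (k.factorial * Real.Gamma (1 - a)) := by
  have hk' : (1 : ℝ) ≤ k := by exact_mod_cast hk
  have := Real.Gamma_pos_of_pos (show 0 < (k : ℝ) - a by linarith)
  have := Real.Gamma_pos_of_pos (show 0 < 1 - a by linarith)
  positivity

theorem genStirling_nonneg (ha : a < 1) (n l : ℕ) : 0 ≤ genStirling a n l :=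
  mul_nonneg (by positivity) <| sum_nonneg fun _ hf => prod_nonneg fun k _ =>
    (Gamma_sub_div_factorial_mul_pos ha ((mem_filter.1 hf).2 k)).le

theorem genStirling_self_pos (ha : a < 1) (n : ℕ) : 0 < genStirling a n n := by
  refine mul_pos (by positivity) <| sum_pos' (fun _ hf => prod_nonneg fun k _ =>
    (Gamma_sub_div_factorial_mul_pos ha ((mem_filter.1 hf).2 k)).le) ⟨fun _ => 1, ?_, ?_⟩
  · simp [Nat.mem_antidiagonalTuple]
  · exact prod_pos fun _ _ => Gamma_sub_div_factorial_mul_pos ha one_pos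

theorem Dsum_pos (hγ : 0 < γ0) (ha : a < 1) (hp : 0 < p) (n : ℕ) : 0 < Dsum γ0 a p n := by
  have hterm (l : ℕ) : 0 ≤ γ0 ^ l * p ^ (-(a * l)) * genStirling a n l :=
    mul_nonneg (by positivity) (genStirling_nonneg ha n l)
  refine sum_pos' (fun l _ => hterm l) ⟨n, self_mem_range_succ n, ?_⟩
  have := genStirling_self_pos ha n
  positivity

variable {n m : ℕ} {t : Fin n} {σ : Finset (Finset (Fin n))} {B : Finset (Fin n)}

theorem crsfW_eq_mul_Dsum_div (k : ℕ) (hk : Dsum γ0 a p k ≠ 0) (P : Finset (Finset (Fin n))) :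
    crsfW γ0 a p m P = crsfW γ0 a p k P * (Dsum γ0 a p k / Dsum γ0 a p m) := by
  rw [crsfW, crsfW, div_mul_div_cancel₀ hk]

theorem crsfW_insert_singleton (hΓ : Real.Gamma (1 - a) ≠ 0) (hp : 0 < p) (ht : {t} ∉ σ) :
    crsfW γ0 a p m (insert {t} σ) = crsfW γ0 a p m σ * (γ0 * p ^ (-a)) := by
  have hpow : p ^ (-(a * ((σ.card + 1 : ℕ) : ℝ))) = p ^ (-(a * σ.card)) * p ^ (-a) := by
    rw [← Real.rpow_add hp]
    push_cast
    ring_nf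
  simp only [crsfW, card_insert_of_notMem ht, prod_insert ht, card_singleton, Nat.cast_one,
    div_self hΓ, hpow]
  ring

theorem crsfW_insertInto (ht : ∀ C ∈ σ, t ∉ C) (hB : B ∈ σ) (hBa : (B.card : ℝ) - a ≠ 0) :
    crsfW γ0 a p m (insertInto t σ B) = crsfW γ0 a p m σ * ((B.card : ℝ) - a) := by
  have hnew : insert t B ∉ σ.erase B := fun h => ht _ (mem_of_mem_erase h) (mem_insert_self t B)
  have hcard : (insertInto t σ B).card = σ.card := by
    rw [insertInto, card_insert_of_notMem hnew, card_erase_add_one hB]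
  have hGamma : Real.Gamma (((insert t B).card : ℝ) - a)
      = ((B.card : ℝ) - a) * Real.Gamma (B.card - a) := by
    rw [card_insert_of_notMem (ht B hB), Nat.cast_succ, add_sub_right_comm, Real.Gamma_add_one hBa]
  rw [crsfW, crsfW, hcard, insertInto, prod_insert hnew, ← prod_erase_mul σ _ hB, hGamma]
  ring

theorem sum_crsfW_filter_eraseElem (h : IsPartitionOfCompl t σ) (ha : a < 1) (hp : 0 < p) :
    ∑ π ∈ (partitionsOf n).filter (fun π => eraseElem t π = σ), crsfW γ0 a p m π
      = crsfW γ0 a p m σ * (γ0 * p ^ (-a) + ∑ B ∈ σ, ((B.card : ℝ) - a)) := by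
  obtain ⟨h0, ht, -⟩ := id h
  have hΓ : Real.Gamma (1 - a) ≠ 0 := (Real.Gamma_pos_of_pos (by linarith)).ne'
  have hBa (B) (hB : B ∈ σ) : (B.card : ℝ) - a ≠ 0 := by
    have : (1 : ℝ) ≤ B.card := by
      exact_mod_cast card_pos.2 (nonempty_of_ne_empty (ne_of_mem_of_not_mem hB h0))
    linarith
  rw [filter_eraseElem_eq h, sum_image (insertInto_injOn ht), sum_insert h0, insertInto_empty h0,
    crsfW_insert_singleton hΓ hp fun hs => ht _ hs (mem_singleton_self t), mul_add, mul_sum]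
  exact congrArg _ (sum_congr rfl fun B hB => crsfW_insertInto ht hB (hBa B hB))

end Weights

section LastElement

variable {m : ℕ}

theorem val_lt_iff_ne_last (x : Fin (m + 1)) : (x : ℕ) < m ↔ x ≠ Fin.last m :=
  Fin.lt_last_iff_ne_last

theorem restrictFirst_eq_eraseElem_last (P : Finset (Finset (Fin (m + 1)))) :
    restrictFirst (m + 1) m P = eraseElem (Fin.last m) P := by
  simp only [restrictFirst, eraseElem, val_lt_iff_ne_last, filter_ne']

theorem IsPartitionOn.isPartitionOfCompl_last {σ : Finset (Finset (Fin (m + 1)))}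
    (h : IsPartitionOn (m + 1) m σ) : IsPartitionOfCompl (Fin.last m) σ := by
  obtain ⟨h0, hlt, hcover⟩ := h
  refine ⟨h0, fun B hB hB' => ?_, fun x hx => hcover x ((val_lt_iff_ne_last x).2 hx)⟩
  exact (val_lt_iff_ne_last _).1 (hlt B hB _ hB') rfl

end LastElement

theorem crsf_marginal_one_step_general (n : ℕ) (hn : 2 ≤ n) (γ0 a p : ℝ)
    (hγ : 0 < γ0) (ha : a < 1) (hp0 : 0 < p)
    (σ : Finset (Finset (Fin n))) (hσ : IsPartitionOn n (n - 1) σ)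
    (l : ℕ) (hl : σ.card = l) :
    ∑ π ∈ (partitionsOf n).filter (fun π => restrictFirst n (n - 1) π = σ),
        crsfW γ0 a p n π
      = crsfW γ0 a p (n - 1) σ * (Dsum γ0 a p (n - 1) / Dsum γ0 a p n) *
          (γ0 * p ^ (-a) + ((n : ℝ) - 1) - a * (l : ℝ)) := by
  obtain ⟨m, rfl⟩ : ∃ m, n = m + 1 := ⟨n - 1, by omega⟩
  rw [Nat.add_sub_cancel] at hσ ⊢
  have hσ' := hσ.isPartitionOfCompl_last
  simp only [restrictFirst_eq_eraseElem_last]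
  rw [sum_crsfW_filter_eraseElem hσ' ha hp0, crsfW_eq_mul_Dsum_div m (Dsum_pos hγ ha hp0 m).ne',
    sum_sub_distrib, ← Nat.cast_sum, hσ'.sum_card, sum_const, hl, Fintype.card_fin]
  simp only [Nat.add_sub_cancel, nsmul_eq_mul, Nat.cast_add, Nat.cast_one]
  ring

/-- Violation of the addition rule: for n ≥ 2 and a set partition σ of {1,…,n−1}
with l blocks, the sum of w_n(π) over all set partitions π of {1,…,n} whose
restriction to {1,…,n−1} equals σ is
w_{n−1}(σ) · (D_{n−1}/D_n) · [γ0·p^{−a} + (n−1) − a·l]. -/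
theorem crsf_marginal_one_step (n : ℕ) (hn : 2 ≤ n) (γ0 a p : ℝ)
    (hγ : 0 < γ0) (ha : a < 1) (hp0 : 0 < p) (hp1 : p < 1)
    (σ : Finset (Finset (Fin n))) (hσ : IsPartitionOn n (n - 1) σ)
    (l : ℕ) (hl : σ.card = l) :
    ∑ π ∈ (partitionsOf n).filter (fun π => restrictFirst n (n - 1) π = σ),
        crsfW γ0 a p n π
      = crsfW γ0 a p (n - 1) σ * (Dsum γ0 a p (n - 1) / Dsum γ0 a p n) *
          (γ0 * p ^ (-a) + ((n : ℝ) - 1) - a * (l : ℝ)) :=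
  crsf_marginal_one_step_general n hn γ0 a p hγ ha hp0 σ hσ l hl
end
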